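/- arXiv:1104.2304 — 9 statements merged into one kernel-verified Lean document; each statement's English description precedes it below -/
import Mathlib

section
/- Let S be an E-unitary inverse semigroup with E = E(S), let s, t ∈ S satisfy σ(s) = σ(t), and let φ be a semi-character of E with φ(s*·s) = true and φ(t*·t) = true. Then φ(s*·e·s) = φ(t*·e·t) for every e ∈ E; that is, s·φ = t·φ. -/
class InverseSemigroup (S : Type*) extends Semigroup S, StarMul S where
  mul_star_mul_self : ∀ s : S, s * star s * s = s
  star_mul_star_self : ∀ s : S, star s * s * star s = star s
  idem_comm : ∀ e f : S, e * e = e → f * f = f → e * f = f * e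

namespace InverseSemigroup

variable {S : Type*} [InverseSemigroup S]

lemma idem_star_mul (s : S) : (star s * s) * (star s * s) = star s * s := by
  calc (star s * s) * (star s * s) = star s * (s * star s * s) := by
        simp only [mul_assoc]
    _ = star s * s := by rw [mul_star_mul_self]

lemma mul_star_idem (s : S) : (s * star s) * (s * star s) = s * star s := by
  calc (s * star s) * (s * star s) = s * (star s * s * star s) := by
        simp only [mul_assoc]
    _ = s * star s := by rw [star_mul_star_self]

lemma idem_mul {e f : S} (he : e * e = e) (hf : f * f = f) :
    (e * f) * (e * f) = e * f := by
  have hc : f * e = e * f := idem_comm f e hf he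
  calc (e * f) * (e * f) = e * (f * e) * f := by simp only [mul_assoc]
    _ = e * (e * f) * f := by rw [hc]
    _ = (e * e) * (f * f) := by simp only [mul_assoc]
    _ = e * f := by rw [he, hf]

lemma idem_conj {e : S} (he : e * e = e) (s : S) :
    (star s * e * s) * (star s * e * s) = star s * e * s := by
  have hf : (s * star s) * (s * star s) = s * star s := mul_star_idem s
  have hc : e * (s * star s) = (s * star s) * e := idem_comm e _ he hf
  calc (star s * e * s) * (star s * e * s)
      = star s * (e * (s * star s)) * (e * s) := by simp only [mul_assoc]
    _ = star s * ((s * star s) * e) * (e * s) := by rw [hc]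
    _ = star s * (s * star s) * (e * e) * s := by simp only [mul_assoc]
    _ = star s * (s * star s) * e * s := by rw [he]
    _ = (star s * s * star s) * e * s := by simp only [mul_assoc]
    _ = star s * e * s := by rw [star_mul_star_self]

lemma conj_mul {e f : S} (_he : e * e = e) (hf : f * f = f) (s : S) :
    (star s * e * s) * (star s * f * s) = star s * (e * f) * s := by
  have hss : (s * star s) * (s * star s) = s * star s := mul_star_idem s
  have hc : (s * star s) * f = f * (s * star s) := idem_comm _ _ hss hf
  calc (star s * e * s) * (star s * f * s)
      = star s * e * ((s * star s) * f) * s := by simp only [mul_assoc]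
    _ = star s * e * (f * (s * star s)) * s := by rw [hc]
    _ = star s * (e * f) * (s * star s * s) := by simp only [mul_assoc]
    _ = star s * (e * f) * s := by rw [mul_star_mul_self]

lemma conj_ss (s : S) : star s * (s * star s) * s = star s * s := by
  calc star s * (s * star s) * s = (star s * s * star s) * s := by
        simp only [mul_assoc]
    _ = star s * s := by rw [star_mul_star_self]

end InverseSemigroup

open InverseSemigroup

/-- The natural partial order on an inverse semigroup: `s ≤ t` iff `s = t·s*·s`. -/
def nle {S : Type*} [InverseSemigroup S] (s t : S) : Prop := s = t * (star s * s)

/-- `σ(s) = σ(t)` iff `s·e = t·e` for some idempotent `e`. -/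
def sigmaEq {S : Type*} [InverseSemigroup S] (s t : S) : Prop :=
  ∃ e : S, e * e = e ∧ s * e = t * e

/-- `S` is E-unitary if every element above a nonzero idempotent is idempotent. -/
def EUnitary (S : Type*) [InverseSemigroup S] : Prop :=
  ∀ e s : S, e * e = e → nle e s → s * s = s

/-- The semilattice of idempotents of an inverse semigroup. -/
def Idem (S : Type*) [InverseSemigroup S] : Type _ := {e : S // e * e = e}

instance {S : Type*} [InverseSemigroup S] : Mul (Idem S) :=
  ⟨fun e f => ⟨e.1 * f.1, idem_mul e.2 f.2⟩⟩

/-- A semi-character of a semilattice. -/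
structure SemiChar (E : Type*) [Mul E] where
  toFun : E → Bool
  map_mul' : ∀ e f : E, toFun (e * f) = (toFun e && toFun f)
  exists_true : ∃ e : E, toFun e = true

/-- The space `Ê` of semi-characters, with the subspace topology from `Bool^E`. -/
instance {E : Type*} [Mul E] : TopologicalSpace (SemiChar E) :=
  TopologicalSpace.induced (fun χ => χ.toFun) Pi.topologicalSpace

/-- For `e` idempotent, `s*·e·s` is idempotent. -/
def conjIdem {S : Type*} [InverseSemigroup S] (s : S) (e : Idem S) : Idem S :=
  ⟨star s * e.1 * s, idem_conj e.2 s⟩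

/-- The semi-character `s·χ` defined by `(s·χ)(e) = χ(s*·e·s)`. -/
def sDot {S : Type*} [InverseSemigroup S] (s : S) (χ : SemiChar (Idem S))
    (h : χ.toFun ⟨star s * s, idem_star_mul s⟩ = true) : SemiChar (Idem S) where
  toFun e := χ.toFun (conjIdem s e)
  map_mul' e f := by
    have heq : conjIdem s (e * f) = conjIdem s e * conjIdem s f :=
      Subtype.ext (conj_mul e.2 f.2 s).symm
    simp only [heq, χ.map_mul']
  exists_true := ⟨⟨s * star s, mul_star_idem s⟩, by
    have heq : conjIdem s ⟨s * star s, mul_star_idem s⟩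
        = (⟨star s * s, idem_star_mul s⟩ : Idem S) := Subtype.ext (conj_ss s)
    simp only [heq]; exact h⟩

/-!
E-unitarity forces `s·t*` to be idempotent, so `s` and `t` agree on the idempotent
`h = s*s·t*t`. Multiplying by `h` turns `s*·e·s` and `t*·e·t` into `(sh)*·e·(sh) = (th)*·e·(th)`,
and a semi-character with `φ(h) = true` cannot tell two idempotents apart once they agree after
multiplication by `h`.
-/

namespace InverseSemigroup

variable {S : Type*} [InverseSemigroup S]

lemma star_eq_self_of_idem {e : S} (he : e * e = e) : star e = e := by
  have hstar : star e * star e = star e := by rw [← star_mul, he]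
  calc star e = star e * (e * e) * star e := by rw [he, star_mul_star_self]
    _ = (star e * e) * (e * star e) := by simp only [mul_assoc]
    _ = (e * star e) * (star e * e) := idem_comm _ _ (idem_star_mul e) (mul_star_idem e)
    _ = e * (star e * star e) * e := by simp only [mul_assoc]
    _ = e := by rw [hstar, mul_star_mul_self]

/-- If `s·e = t·e`, the idempotent `t·e·t*` lies below `s·t*`, so E-unitarity makes `s·t*`
idempotent. -/
lemma mul_star_idem_of_sigmaEq (hE : EUnitary S) {s t : S} (hst : sigmaEq s t) :
    (s * star t) * (s * star t) = s * star t := by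
  obtain ⟨e, he, hse⟩ := hst
  have hf : (t * e * star t) * (t * e * star t) = t * e * star t := by
    simpa only [star_star] using idem_conj he (star t)
  have hbelow : (s * star t) * (t * e * star t) = t * e * star t :=
    calc (s * star t) * (t * e * star t) = s * ((star t * t) * e) * star t := by
          simp only [mul_assoc]
      _ = s * (e * (star t * t)) * star t := by
          rw [idem_comm _ _ (idem_star_mul t) he]
      _ = (s * e) * (star t * t * star t) := by simp only [mul_assoc]
      _ = t * e * star t := by rw [hse, star_mul_star_self, mul_assoc]
  refine hE _ _ hf ?_
  rw [nle, star_eq_self_of_idem hf, hf, hbelow]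

lemma mul_eq_mul_of_mul_star_idem {s t : S} (hu : (s * star t) * (s * star t) = s * star t) :
    s * (star s * s * (star t * t)) = t * (star s * s * (star t * t)) := by
  have hcomm : t * star s = s * star t := by
    rw [← star_eq_self_of_idem hu, star_mul, star_star]
  calc s * (star s * s * (star t * t)) = (s * star s * s) * star t * t := by
        simp only [mul_assoc]
    _ = (t * star s) * (s * star t) * t := by rw [mul_star_mul_self, hcomm, hu]
    _ = t * (star s * s * (star t * t)) := by simp only [mul_assoc]

lemma conj_mul_idem {e h : S} (he : e * e = e) (hh : h * h = h) (r : S) :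
    (star r * e * r) * h = star (r * h) * e * (r * h) :=
  calc (star r * e * r) * h = ((star r * e * r) * h) * h := by rw [mul_assoc _ h h, hh]
    _ = (h * (star r * e * r)) * h := by rw [idem_comm _ _ (idem_conj he r) hh]
    _ = star (r * h) * e * (r * h) := by
        rw [star_mul, star_eq_self_of_idem hh]; simp only [mul_assoc]

end InverseSemigroup

lemma SemiChar.toFun_eq_of_mul_eq {E : Type*} [Mul E] (χ : SemiChar E) {h a b : E}
    (hχ : χ.toFun h = true) (hab : a * h = b * h) : χ.toFun a = χ.toFun b := by
  simpa only [χ.map_mul', hχ, Bool.and_true] using congrArg χ.toFun hab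

theorem stmt2 {S : Type*} [InverseSemigroup S] (hE : EUnitary S)
    (s t : S) (hst : sigmaEq s t) (χ : SemiChar (Idem S))
    (hs : χ.toFun ⟨star s * s, idem_star_mul s⟩ = true)
    (ht : χ.toFun ⟨star t * t, idem_star_mul t⟩ = true) :
    ∀ e : Idem S, χ.toFun (conjIdem s e) = χ.toFun (conjIdem t e) := by
  intro e
  let h : Idem S := ⟨star s * s, idem_star_mul s⟩ * ⟨star t * t, idem_star_mul t⟩
  have hχ : χ.toFun h = true := (χ.map_mul' _ _).trans (by rw [hs, ht]; rfl)
  have hsh : s * h.1 = t * h.1 :=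
    mul_eq_mul_of_mul_star_idem (mul_star_idem_of_sigmaEq hE hst)
  refine χ.toFun_eq_of_mul_eq hχ (Subtype.ext ?_)
  change (star s * e.1 * s) * h.1 = (star t * e.1 * t) * h.1
  rw [conj_mul_idem e.2 h.2, conj_mul_idem e.2 h.2, hsh]
end

section
/- Let S be a countable E-unitary inverse semigroup with E = E(S). Let Ω = {(s, φ) ∈ S × Ê : φ(s*·s) = true}, topologized as a subspace of S × Ê where S is discrete, and let ~ be the relation on Ω given by (s, φ) ~ (t, ψ) iff φ = ψ and there exists u ∈ S with u ≤ s, u ≤ t and φ(u*·u) = true; give the quotient Ω/~ the quotient topology (this is the underlying topological space of Paterson's universal groupoid of S). Let S/σ denote the quotient of S by the relation σ(s) = σ(t), given the discrete topology. Then the map from Ω/~ to (S/σ) × Ê sending the class of (s, φ) to ([s]_σ, φ) is well defined and is a homeomorphism onto its image {([s]_σ, φ) : (s, φ) ∈ Ω} with the subspace topology of the product; in particular, the universal groupoid of S is homeomorphic to the partial transformation groupoid G ⋉ Ê of the maximal group image G = S/σ acting partially on Ê. -/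
open InverseSemigroup

/-- The space `Ω = {(s, φ) : φ(s*·s) = true}`, where `S` carries the discrete topology. -/
def Omega (S : Type*) [InverseSemigroup S] : Type _ :=
  {p : S × SemiChar (Idem S) // p.2.toFun ⟨star p.1 * p.1, idem_star_mul p.1⟩ = true}

instance OmegaTop (S : Type*) [InverseSemigroup S] : TopologicalSpace (Omega S) :=
  letI : TopologicalSpace S := ⊥
  inferInstanceAs (TopologicalSpace
    {p : S × SemiChar (Idem S) // p.2.toFun ⟨star p.1 * p.1, idem_star_mul p.1⟩ = true})

/-- The germ relation: `(s, φ) ~ (t, ψ)` iff `φ = ψ` and there is `u ≤ s, t` with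
`φ(u*·u) = true`. -/
def germRel {S : Type*} [InverseSemigroup S] (p q : Omega S) : Prop :=
  p.1.2 = q.1.2 ∧ ∃ u : S, nle u p.1.1 ∧ nle u q.1.1 ∧
    p.1.2.toFun ⟨star u * u, idem_star_mul u⟩ = true

/-- The quotient `Ω/~` (the underlying space of Paterson's universal groupoid),
with the quotient topology. -/
def UnivSpace (S : Type*) [InverseSemigroup S] : Type _ := Quot (germRel (S := S))

instance (S : Type*) [InverseSemigroup S] : TopologicalSpace (UnivSpace S) :=
  inferInstanceAs (TopologicalSpace (Quot (germRel (S := S))))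

/-- The class of `(s, φ)` in `Ω/~`. -/
def germMk {S : Type*} [InverseSemigroup S] (p : Omega S) : UnivSpace S :=
  Quot.mk (germRel (S := S)) p

/-- The maximal group image `S/σ`, with the discrete topology. -/
def SigmaQuot (S : Type*) [InverseSemigroup S] : Type _ := Quot (sigmaEq (S := S))

instance (S : Type*) [InverseSemigroup S] : TopologicalSpace (SigmaQuot S) := ⊥

/-- The class `[s]_σ` of `s` in `S/σ`. -/
def sigmaMk {S : Type*} [InverseSemigroup S] (s : S) : SigmaQuot S :=
  Quot.mk (sigmaEq (S := S)) s

/-!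
If `s·e = t·e` in an E-unitary semigroup, then `s·t*` lies above the idempotent `t·e·t*`, hence is
idempotent, and `s·t*·t` is a common lower bound of `s` and `t` with domain `s*·s·t*·t`. So a germ
`[s, φ]` is determined by `([s]_σ, φ)`, and the map `[s, φ] ↦ ([s]_σ, φ)` is injective. It is
continuous, and open because `Ω` is open in `S × Ê` (`S` being discrete) and `S/σ` is discrete;
an injective continuous open map is an embedding.
-/

namespace InverseSemigroup

variable {S : Type*} [InverseSemigroup S]

lemma sigmaEq_equivalence : Equivalence (sigmaEq (S := S)) where
  refl s := ⟨star s * s, idem_star_mul s, rfl⟩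
  symm := fun ⟨e, he, h⟩ => ⟨e, he, h.symm⟩
  trans := fun {s t r} ⟨e, he, hst⟩ ⟨f, hf, htr⟩ => ⟨e * f, idem_mul he hf, by
    calc s * (e * f) = t * e * f := by rw [← mul_assoc, hst]
      _ = t * f * e := by rw [mul_assoc, idem_comm e f he hf, ← mul_assoc]
      _ = r * (e * f) := by rw [htr, mul_assoc, idem_comm f e hf he]⟩

lemma sigmaEq_of_sigmaMk_eq {s t : S} (h : sigmaMk s = sigmaMk t) : sigmaEq s t :=
  sigmaEq_equivalence.eqvGen_iff.mp (Quot.eqvGen_exact h)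

lemma sigmaEq_of_nle_of_nle {u s t : S} (hs : nle u s) (ht : nle u t) : sigmaEq s t :=
  ⟨star u * u, idem_star_mul u, hs.symm.trans ht⟩

lemma mul_star_idem_of_mul_eq (hE : EUnitary S) {e s t : S} (he : e * e = e)
    (hst : s * e = t * e) : (s * star t) * (s * star t) = s * star t := by
  have hf : (t * e * star t) * (t * e * star t) = t * e * star t := by
    simpa only [star_star] using idem_conj he (star t)
  refine hE _ _ hf ?_
  show t * e * star t = s * star t * (star (t * e * star t) * (t * e * star t))
  rw [star_eq_self_of_idem hf, hf]
  calc t * e * star t = s * e * (star t * t * star t) := by rw [hst, star_mul_star_self]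
    _ = s * (star t * t * e) * star t := by
        rw [idem_comm _ _ (idem_star_mul t) he]; simp only [mul_assoc]
    _ = s * star t * (t * e * star t) := by simp only [mul_assoc]

lemma exists_nle_nle_of_sigmaEq (hE : EUnitary S) {s t : S} (h : sigmaEq s t) :
    ∃ u : S, nle u s ∧ nle u t ∧ star u * u = (star s * s) * (star t * t) := by
  obtain ⟨e, he, hst⟩ := h
  have hw := mul_star_idem_of_mul_eq hE he hst
  have hts : t * star s = s * star t := by
    rw [← star_eq_self_of_idem hw, star_mul, star_star]
  have hu : star (s * (star t * t)) * (s * (star t * t)) = (star s * s) * (star t * t) := by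
    rw [star_mul, star_mul, star_star]
    calc star t * t * star s * (s * (star t * t))
        = (star t * t) * ((star s * s) * (star t * t)) := by simp only [mul_assoc]
      _ = (star s * s) * (star t * t) * (star t * t) :=
          idem_comm _ _ (idem_star_mul t) (idem_mul (idem_star_mul s) (idem_star_mul t))
      _ = (star s * s) * (star t * t) := by rw [mul_assoc, idem_star_mul t]
  refine ⟨s * (star t * t), ?_, ?_, hu⟩
  · show _ = s * (star (s * (star t * t)) * (s * (star t * t)))
    rw [hu, ← mul_assoc s (star s * s), ← mul_assoc s (star s), mul_star_mul_self]
  · show _ = t * (star (s * (star t * t)) * (s * (star t * t)))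
    rw [hu]
    calc s * (star t * t) = (s * star t) * (s * star t) * t := by rw [hw, mul_assoc]
      _ = (t * star s) * (s * star t) * t := by rw [hts]
      _ = t * (star s * s * (star t * t)) := by simp only [mul_assoc]

end InverseSemigroup

lemma SemiChar.isOpen_setOf_toFun_eq_true {E : Type*} [Mul E] (e : E) :
    IsOpen {χ : SemiChar E | χ.toFun e = true} :=
  show IsOpen ((fun χ : SemiChar E => χ.toFun) ⁻¹' ((fun g : E → Bool => g e) ⁻¹' {true})) from
  isOpen_induced ((isOpen_discrete {true}).preimage (continuous_apply e))

section UniversalGroupoid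

variable {S : Type*} [InverseSemigroup S]

def domIdem (s : S) : Idem S := ⟨star s * s, idem_star_mul s⟩

lemma sigmaMk_eq_of_germRel {p q : Omega S} (h : germRel p q) :
    ((sigmaMk p.1.1, p.1.2) : SigmaQuot S × SemiChar (Idem S)) = (sigmaMk q.1.1, q.1.2) := by
  obtain ⟨hφ, u, hus, hut, -⟩ := h
  rw [Prod.mk.injEq]
  exact ⟨Quot.sound (sigmaEq_of_nle_of_nle hus hut), hφ⟩

lemma germRel_of_sigmaEq (hE : EUnitary S) {p q : Omega S} (h : sigmaEq p.1.1 q.1.1)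
    (hφ : p.1.2 = q.1.2) : germRel p q := by
  obtain ⟨u, hus, hut, hu⟩ := exists_nle_nle_of_sigmaEq hE h
  refine ⟨hφ, u, hus, hut, ?_⟩
  have hmeet : (⟨star u * u, idem_star_mul u⟩ : Idem S) = domIdem p.1.1 * domIdem q.1.1 :=
    Subtype.ext hu
  have hp : p.1.2.toFun (domIdem p.1.1) = true := p.2
  have hq : q.1.2.toFun (domIdem q.1.1) = true := q.2
  rw [hmeet, p.1.2.map_mul', hp, hφ, hq]
  rfl

def omegaToProd (p : Omega S) : SigmaQuot S × SemiChar (Idem S) := (sigmaMk p.1.1, p.1.2)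

def germToProd : UnivSpace S → SigmaQuot S × SemiChar (Idem S) :=
  Quot.lift omegaToProd fun _ _ => sigmaMk_eq_of_germRel

instance : DiscreteTopology (SigmaQuot S) := ⟨rfl⟩

lemma continuous_omegaToProd : Continuous (omegaToProd (S := S)) := by
  let _ : TopologicalSpace S := ⊥
  exact (continuous_bot.comp (continuous_fst.comp continuous_subtype_val)).prodMk
    (continuous_snd.comp continuous_subtype_val)

lemma isOpenMap_omegaToProd : IsOpenMap (omegaToProd (S := S)) := by
  let _ : TopologicalSpace S := ⊥
  have : DiscreteTopology S := ⟨rfl⟩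
  have hΩ : IsOpen {p : S × SemiChar (Idem S) | p.2.toFun (domIdem p.1) = true} := by
    have h : {p : S × SemiChar (Idem S) | p.2.toFun (domIdem p.1) = true}
        = ⋃ s : S, {s} ×ˢ {χ | χ.toFun (domIdem s) = true} := by
      ext ⟨s, χ⟩
      simp
    rw [h]
    exact isOpen_iUnion fun s =>
      (isOpen_discrete _).prod (SemiChar.isOpen_setOf_toFun_eq_true _)
  have hσ : IsOpenMap (sigmaMk (S := S)) := fun _ _ => isOpen_discrete _
  exact (hσ.prodMap IsOpenMap.id).comp hΩ.isOpenMap_subtype_val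

lemma continuous_germToProd : Continuous (germToProd (S := S)) :=
  continuous_quot_lift _ continuous_omegaToProd

lemma isOpenMap_germToProd : IsOpenMap (germToProd (S := S)) := by
  intro U hU
  have hU' : germToProd '' U = omegaToProd '' (germMk ⁻¹' U) := by
    ext x
    constructor
    · rintro ⟨⟨p⟩, hp, rfl⟩
      exact ⟨p, hp, rfl⟩
    · rintro ⟨p, hp, rfl⟩
      exact ⟨germMk p, hp, rfl⟩
  rw [hU']
  exact isOpenMap_omegaToProd _ hU

lemma germToProd_injective (hE : EUnitary S) : Function.Injective (germToProd (S := S)) := by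
  rintro ⟨p⟩ ⟨q⟩ h
  obtain ⟨hσ, hφ⟩ : sigmaMk p.1.1 = sigmaMk q.1.1 ∧ p.1.2 = q.1.2 := Prod.ext_iff.mp h
  exact Quot.sound (germRel_of_sigmaEq hE (sigmaEq_of_sigmaMk_eq hσ) hφ)

lemma isOpenEmbedding_germToProd (hE : EUnitary S) :
    Topology.IsOpenEmbedding (germToProd (S := S)) :=
  .of_continuous_injective_isOpenMap continuous_germToProd (germToProd_injective hE)
    isOpenMap_germToProd

end UniversalGroupoid

theorem stmt4_general {S : Type*} [InverseSemigroup S] (hE : EUnitary S) :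
    (∀ p q : Omega S, germRel p q →
      ((sigmaMk p.1.1, p.1.2) : SigmaQuot S × SemiChar (Idem S)) = (sigmaMk q.1.1, q.1.2)) ∧
    ∃ G : UnivSpace S → SigmaQuot S × SemiChar (Idem S),
      (∀ p : Omega S, G (germMk p) = (sigmaMk p.1.1, p.1.2)) ∧
      Topology.IsEmbedding G :=
  ⟨fun _ _ => sigmaMk_eq_of_germRel, germToProd, fun _ => rfl,
    (isOpenEmbedding_germToProd hE).isEmbedding⟩

theorem stmt4 {S : Type*} [InverseSemigroup S] [Countable S] (hE : EUnitary S) :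
    (∀ p q : Omega S, germRel p q →
      ((sigmaMk p.1.1, p.1.2) : SigmaQuot S × SemiChar (Idem S)) = (sigmaMk q.1.1, q.1.2)) ∧
    ∃ G : UnivSpace S → SigmaQuot S × SemiChar (Idem S),
      (∀ p : Omega S, G (germMk p) = (sigmaMk p.1.1, p.1.2)) ∧
      Topology.IsEmbedding G :=
  stmt4_general hE
end

section
/- Let S be an E-unitary inverse semigroup with E = E(S). Let Ω = {(s, φ) ∈ S × Ê : φ(s*·s) = true}, topologized as a subspace of S × Ê where S is discrete, and let ~ be the relation on Ω given by (s, φ) ~ (t, ψ) iff φ = ψ and there exists u ∈ S with u ≤ s, u ≤ t and φ(u*·u) = true. Then the quotient space Ω/~ with the quotient topology (the underlying space of Paterson's universal groupoid of S) is Hausdorff. -/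
open InverseSemigroup

/-!
In an E-unitary inverse semigroup, whether `a·s*` is idempotent depends only on the germ of
`a`: a common lower bound `u ≤ a, b` gives `u·s* ≤ a·s*, b·s*`, and idempotency passes down
to `u·s*` (the idempotents form an order ideal) and back up to `b·s*` (E-unitarity). Together
with the semi-character, these idempotency tests form a continuous germ invariant with values
in a product of discrete spaces. It separates germs: if `b·a*` is idempotent then `b·a*a` lies
below both `a` and `b`, so `(a, φ) ~ (b, φ)`. A continuous injection into a Hausdorff space
makes the quotient Hausdorff.
-/

namespace InverseSemigroup

variable {S : Type*} [InverseSemigroup S]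

lemma star_eq_self_of_isIdempotentElem {e : S} (he : IsIdempotentElem e) : star e = e := by
  have hstar : IsIdempotentElem (star e) := by
    rw [IsIdempotentElem, ← star_mul, he.eq]
  have h : e = star e * e := by
    conv_lhs => rw [← mul_star_mul_self e]
    rw [idem_comm e (star e) he hstar, mul_assoc, he.eq]
  calc star e = star (star e * e) := by rw [← h]
    _ = star e * e := by rw [star_mul, star_star]
    _ = e := h.symm

lemma idem_mul_eq_mul_conj {e : S} (he : IsIdempotentElem e) (x : S) :
    e * x = x * (star x * e * x) := by
  calc e * x = e * (x * star x * x) := by rw [mul_star_mul_self]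
    _ = e * (x * star x) * x := by simp only [mul_assoc]
    _ = x * star x * e * x := by rw [idem_comm e _ he (mul_star_idem x)]
    _ = x * (star x * e * x) := by simp only [mul_assoc]

lemma star_mul_idem_mul {e : S} (he : IsIdempotentElem e) (x : S) :
    star (x * e) * (x * e) = star x * x * e := by
  calc star (x * e) * (x * e) = e * (star x * x * e) := by
        rw [star_mul, star_eq_self_of_isIdempotentElem he]; simp only [mul_assoc]
    _ = star x * x * (e * e) := by
        rw [← mul_assoc, idem_comm e _ he (idem_star_mul x), mul_assoc]
    _ = star x * x * e := by rw [he.eq]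

lemma nle_iff_exists_idem {u a : S} : nle u a ↔ ∃ e, IsIdempotentElem e ∧ u = a * e := by
  refine ⟨fun h => ⟨star u * u, idem_star_mul u, h⟩, ?_⟩
  rintro ⟨e, he, rfl⟩
  change a * e = a * (star (a * e) * (a * e))
  rw [star_mul_idem_mul he]
  simp only [← mul_assoc, mul_star_mul_self]

lemma nle_mul_idem {e : S} (he : IsIdempotentElem e) (a : S) : nle (a * e) a :=
  nle_iff_exists_idem.2 ⟨e, he, rfl⟩

lemma nle_mul_right {u a : S} (h : nle u a) (x : S) : nle (u * x) (a * x) := by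
  obtain ⟨e, he, rfl⟩ := nle_iff_exists_idem.1 h
  refine nle_iff_exists_idem.2 ⟨star x * e * x, idem_conj he x, ?_⟩
  rw [mul_assoc, idem_mul_eq_mul_conj he]
  simp only [mul_assoc]

lemma isIdempotentElem_of_nle {u f : S} (h : nle u f) (hf : IsIdempotentElem f) :
    IsIdempotentElem u := by
  obtain ⟨e, he, rfl⟩ := nle_iff_exists_idem.1 h
  exact idem_mul hf he

lemma isIdempotentElem_mul_star_of_common_lower_bound (hE : EUnitary S) {u a b : S}
    (hua : nle u a) (hub : nle u b) {s : S} (h : IsIdempotentElem (a * star s)) :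
    IsIdempotentElem (b * star s) :=
  hE _ _ (isIdempotentElem_of_nle (nle_mul_right hua _) h) (nle_mul_right hub _)

lemma nle_of_isIdempotentElem_mul_star {s t : S} (h : IsIdempotentElem (t * star s)) :
    nle (t * (star s * s)) s := by
  refine nle_iff_exists_idem.2 ⟨star s * (t * star s) * s, idem_conj h s, ?_⟩
  rw [← idem_mul_eq_mul_conj h, mul_assoc]

end InverseSemigroup

lemma SemiChar.toFun_injective {E : Type*} [Mul E] :
    Function.Injective (SemiChar.toFun (E := E)) := by
  rintro ⟨χ, _, _⟩ ⟨ψ, _, _⟩ (rfl : χ = ψ)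
  rfl

namespace Omega

variable {S : Type*} [InverseSemigroup S]

noncomputable def germInvariant (x : Omega S) : (S → Bool) × (Idem S → Bool) :=
  open Classical in (fun s => decide (IsIdempotentElem (x.1.1 * star s)), x.1.2.toFun)

lemma continuous_germInvariant : Continuous (germInvariant (S := S)) := by
  let _ : TopologicalSpace S := ⊥
  have : DiscreteTopology S := ⟨rfl⟩
  have hval : Continuous (fun x : Omega S => x.1) := continuous_subtype_val
  refine Continuous.prodMk ?_ ?_
  · classical
    exact (continuous_of_discreteTopology
      (f := fun a : S => fun s => decide (IsIdempotentElem (a * star s)))).comp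
      (continuous_fst.comp hval)
  · exact (continuous_induced_dom (f := fun χ : SemiChar (Idem S) => χ.toFun)).comp
      (continuous_snd.comp hval)

lemma germInvariant_eq_of_germRel (hE : EUnitary S) {x y : Omega S} (h : germRel x y) :
    germInvariant x = germInvariant y := by
  obtain ⟨hφ, u, hux, huy, -⟩ := h
  refine Prod.ext (funext fun s => ?_) (congrArg SemiChar.toFun hφ)
  exact decide_eq_decide.2
    ⟨isIdempotentElem_mul_star_of_common_lower_bound hE hux huy,
      isIdempotentElem_mul_star_of_common_lower_bound hE huy hux⟩

lemma germRel_of_germInvariant_eq {x y : Omega S} (h : germInvariant x = germInvariant y) :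
    germRel x y := by
  obtain ⟨⟨a, φ⟩, ha⟩ := x
  obtain ⟨⟨b, ψ⟩, hb⟩ := y
  simp only [germInvariant, Prod.mk.injEq, funext_iff, decide_eq_decide] at h
  obtain ⟨hidem, hφψ⟩ := h
  obtain rfl : φ = ψ := SemiChar.toFun_injective (funext hφψ)
  have hba : IsIdempotentElem (b * star a) := (hidem a).1 (mul_star_idem a)
  refine ⟨rfl, b * (star a * a), nle_of_isIdempotentElem_mul_star hba,
    nle_mul_idem (idem_star_mul a) b, ?_⟩
  let eb : Idem S := ⟨star b * b, idem_star_mul b⟩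
  let ea : Idem S := ⟨star a * a, idem_star_mul a⟩
  have hsplit : (⟨star (b * (star a * a)) * (b * (star a * a)), idem_star_mul _⟩ : Idem S) =
      eb * ea :=
    Subtype.ext (star_mul_idem_mul (idem_star_mul a) b)
  change φ.toFun _ = true
  rw [hsplit, φ.map_mul']
  exact Bool.and_eq_true_iff.2 ⟨hb, ha⟩

end Omega

theorem stmt5 {S : Type*} [InverseSemigroup S] (hE : EUnitary S) :
    T2Space (UnivSpace S) := by
  let f : UnivSpace S → (S → Bool) × (Idem S → Bool) :=
    Quot.lift Omega.germInvariant fun _ _ => Omega.germInvariant_eq_of_germRel hE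
  have hf_inj : Function.Injective f := by
    rintro ⟨x⟩ ⟨y⟩ h
    exact Quot.sound (Omega.germRel_of_germInvariant_eq h)
  exact T2Space.of_injective_continuous hf_inj
    (continuous_quot_lift _ Omega.continuous_germInvariant)
end

section
/- Let S be an inverse semigroup with E = E(S), and let I be a proper ideal of S (that is, S·I ∪ I·S ⊆ I and I ≠ S). Let I^⊥ = {φ ∈ Ê : φ(e) = false for all e ∈ E ∩ I}. Then: (a) I^⊥ is a closed subset of Ê; (b) if φ ∈ I^⊥ and s ∈ S with φ(s*·s) = true, then s ∉ I and the semi-character s·φ belongs to I^⊥. -/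
open InverseSemigroup

theorem stmt6 {S : Type*} [InverseSemigroup S] (I : Set S)
    (hI : ∀ s : S, ∀ i ∈ I, s * i ∈ I ∧ i * s ∈ I) (hproper : I ≠ Set.univ) :
    IsClosed {χ : SemiChar (Idem S) | ∀ e : Idem S, e.1 ∈ I → χ.toFun e = false} ∧
    ∀ χ : SemiChar (Idem S), (∀ e : Idem S, e.1 ∈ I → χ.toFun e = false) →
      ∀ s : S, ∀ h : χ.toFun ⟨star s * s, idem_star_mul s⟩ = true,
        s ∉ I ∧ ∀ e : Idem S, e.1 ∈ I → (sDot s χ h).toFun e = false := by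
  constructor
  · have : {χ : SemiChar (Idem S) | ∀ e : Idem S, e.1 ∈ I → χ.toFun e = false}
        = ⋂ (e : Idem S) (_ : e.1 ∈ I),
          (fun χ : SemiChar (Idem S) => χ.toFun e) ⁻¹' {false} := by
      ext χ; simp [Set.mem_iInter]
    rw [this]
    refine isClosed_iInter fun e => isClosed_iInter fun he => ?_
    refine IsClosed.preimage ?_ (isClosed_discrete _)
    exact (continuous_apply e).comp continuous_induced_dom
  · intro χ hχ s h
    constructor
    · intro hs
      have hm : star s * s ∈ I := ((hI (star s) s hs).1)
      have := hχ ⟨star s * s, idem_star_mul s⟩ hm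
      rw [h] at this; simp at this
    · intro e he
      have hm : star s * e.1 * s ∈ I := (hI s (star s * e.1) (hI (star s) e.1 he).1).2
      exact hχ (conjIdem s e) hm
end

section
/- Let S be an inverse semigroup with a zero element z, let G be a group, and let θ : S∖{z} → G be an idempotent pure partial homomorphism. Let T = {(s, θ(s)) : s ∈ S, s ≠ z} ∪ ({z} × G) ⊆ S × G. Then T is an inverse subsemigroup of the product inverse semigroup S × G (T is closed under coordinatewise multiplication and under the involution (s, g)* = (s*, g⁻¹)), the set {z} × G is an ideal of T, and T is an E-unitary inverse semigroup. -/
open InverseSemigroup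

theorem stmt8 {S : Type*} [InverseSemigroup S] {G : Type*} [Group G]
    (z : S) (hz : ∀ s : S, z * s = z ∧ s * z = z)
    (θ : S → G)
    (hmul : ∀ s t : S, s ≠ z → t ≠ z → s * t ≠ z → θ (s * t) = θ s * θ t)
    (hpure : ∀ s : S, s ≠ z → θ s = 1 → s * s = s)
    (T : Set (S × G)) (hT : T = {p : S × G | (p.1 ≠ z ∧ p.2 = θ p.1) ∨ p.1 = z})
    (pmul : S × G → S × G → S × G) (hpmul : pmul = fun p q => (p.1 * q.1, p.2 * q.2))
    (pstar : S × G → S × G) (hpstar : pstar = fun p => (star p.1, p.2⁻¹)) :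
    (∀ p q : S × G, p ∈ T → q ∈ T → pmul p q ∈ T) ∧
    (∀ p : S × G, p ∈ T → pstar p ∈ T) ∧
    (∀ p q : S × G, p ∈ T → q ∈ T → q.1 = z → (pmul p q).1 = z ∧ (pmul q p).1 = z) ∧
    (∀ p q : S × G, p ∈ T → q ∈ T → pmul p p = p →
      p = pmul q (pmul (pstar p) p) → pmul q q = q) := by
  subst hT hpmul hpstar
  have hzl : ∀ s : S, z * s = z := fun s => (hz s).1
  have hzr : ∀ s : S, s * z = z := fun s => (hz s).2
  have hstar_ne : ∀ s : S, s ≠ z → star s ≠ z := by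
    intro s hs hc
    apply hs
    have h := mul_star_mul_self s
    rw [hc, hzr, hzl] at h
    exact h.symm
  have hss_ne : ∀ s : S, s ≠ z → s * star s ≠ z := by
    intro s hs hc
    apply hs
    have h := mul_star_mul_self s
    rw [hc, hzl] at h
    exact h.symm
  have hθstar : ∀ s : S, s ≠ z → θ (star s) = (θ s)⁻¹ := by
    intro s hs
    have h1 : θ (s * star s) = θ s * θ (star s) :=
      hmul s (star s) hs (hstar_ne s hs) (hss_ne s hs)
    have h2 : θ ((s * star s) * s) = θ (s * star s) * θ s := by
      apply hmul _ _ (hss_ne s hs) hs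
      rw [mul_star_mul_self]; exact hs
    rw [mul_star_mul_self, h1] at h2
    have h3 : θ s * θ (star s) * θ s = 1 * θ s := by rw [one_mul]; exact h2.symm
    have h4 : θ s * θ (star s) = 1 := mul_right_cancel h3
    exact eq_inv_of_mul_eq_one_right h4
  have hstarz : star z = z := by
    have h := star_mul_star_self z
    rw [(hz (star z)).2, (hz (star z)).1] at h
    exact h.symm
  refine ⟨?_, ?_, ?_, ?_⟩
  · intro p q hp hq
    rcases hp with ⟨hp1, hp2⟩ | hp1
    · rcases hq with ⟨hq1, hq2⟩ | hq1
      · by_cases h : p.1 * q.1 = z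
        · exact Or.inr h
        · exact Or.inl ⟨h, by
            show p.2 * q.2 = θ (p.1 * q.1)
            rw [hp2, hq2, hmul p.1 q.1 hp1 hq1 h]⟩
      · exact Or.inr (show p.1 * q.1 = z by rw [hq1, hzr])
    · exact Or.inr (show p.1 * q.1 = z by rw [hp1, hzl])
  · intro p hp
    rcases hp with ⟨hp1, hp2⟩ | hp1
    · exact Or.inl ⟨hstar_ne _ hp1, by
        show p.2⁻¹ = θ (star p.1)
        rw [hp2, hθstar p.1 hp1]⟩
    · exact Or.inr (show star p.1 = z by rw [hp1, hstarz])
  · intro p q _ _ hq1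
    exact ⟨show p.1 * q.1 = z by rw [hq1, hzr],
           show q.1 * p.1 = z by rw [hq1, hzl]⟩
  · intro p q _ hq hpp hpe
    have h2 : p.2 = q.2 := by
      have h := congrArg Prod.snd hpe
      simpa using h
    have hp2 : p.2 * p.2 = p.2 := congrArg Prod.snd hpp
    have hp2one : p.2 = 1 := by
      have : p.2 * p.2 = p.2 * 1 := by rw [mul_one]; exact hp2
      exact mul_left_cancel this
    have hq2 : q.2 = 1 := by rw [← h2, hp2one]
    have hfst : q.1 * q.1 = q.1 := by
      rcases hq with ⟨hq1, hq2θ⟩ | hq1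
      · exact hpure q.1 hq1 (by rw [← hq2θ, hq2])
      · rw [hq1]; exact hzl z
    exact Prod.ext hfst (by show q.2 * q.2 = q.2; rw [hq2, mul_one])
end

section
/- Let φ : E₁ → E₂ be a homomorphism of meet-semilattices. Then the induced map φ̂ : Ê₁ → Ê₂, where φ̂(χ)(f) = true iff there exists x ∈ E₁ with χ(x) = true and φ(x) ≤ f, is continuous if and only if φ is locally coherent. -/
/-- A semi-character of a meet-semilattice. -/
structure SemiCharInf (E : Type*) [SemilatticeInf E] where
  toFun : E → Bool
  map_inf' : ∀ e f : E, toFun (e ⊓ f) = (toFun e && toFun f)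
  exists_true : ∃ e : E, toFun e = true

/-- The space `Ê` of semi-characters, with the subspace topology from `Bool^E`. -/
instance {E : Type*} [SemilatticeInf E] : TopologicalSpace (SemiCharInf E) :=
  TopologicalSpace.induced (fun χ => χ.toFun) Pi.topologicalSpace

/-- A finitely generated downset. -/
def FinGenDownset {P : Type*} [Preorder P] (X : Set P) : Prop :=
  ∃ A : Finset P, X = {y : P | ∃ a ∈ A, y ≤ a}

/-- A downset of a poset. -/
def IsDownset {P : Type*} [Preorder P] (X : Set P) : Prop :=
  ∀ ⦃x y : P⦄, y ≤ x → x ∈ X → y ∈ X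

/-- Local coherence of a semilattice homomorphism. -/
def LocallyCoherent {E₁ E₂ : Type*} [SemilatticeInf E₁] [SemilatticeInf E₂]
    (φ : E₁ → E₂) : Prop :=
  ∀ x : E₁, ∃ X : Set E₁, IsDownset X ∧ x ∈ X ∧
    ∀ e : E₂, FinGenDownset {y : E₁ | y ∈ X ∧ φ y ≤ e}

/-!
For `(⇐)`: if `χ₀ x = true`, `X ∋ x` is the downset given by local coherence and
`{y ∈ X | φ y ≤ f} = ↓A`, then for every `χ` with `χ x = true` we have `φ̂ χ f = true` iff `χ`
is `true` somewhere on `A`. So near `χ₀`, `φ̂ χ f` only depends on the finitely many values of `χ`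
on `{x} ∪ A`.

For `(⇒)`: take `X = ↓x`. If `D = {y ≤ x | φ y ≤ e}` is not finitely generated, choose for each
finite `A` some `y A ∈ D` lying below no element of `A ∩ D`. Along an ultrafilter finer than
`atTop`, the principal characters `z ↦ (y A ≤ z)` converge to a semi-character `χ₀`. Each
`φ̂ (principal (y A))` is `true` at `e`, but `φ̂ χ₀ e = false`: a witness `z` would give
`z ⊓ x ∈ D` above `y A` for `A` eventually containing `z ⊓ x`. This contradicts continuity.
-/

open Filter Topology

namespace SemiCharInf

variable {E : Type*} [SemilatticeInf E]

theorem eq_true_of_le (χ : SemiCharInf E) {a b : E} (hab : a ≤ b) (ha : χ.toFun a = true) :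
    χ.toFun b = true := by
  have h := χ.map_inf' a b
  rwa [inf_eq_left.2 hab, ha, Bool.true_and, eq_comm] at h

theorem inf_eq_true (χ : SemiCharInf E) {a b : E} (ha : χ.toFun a = true)
    (hb : χ.toFun b = true) : χ.toFun (a ⊓ b) = true := by
  rw [χ.map_inf', ha, hb, Bool.and_self]

open scoped Classical in
noncomputable def principal (w : E) : SemiCharInf E where
  toFun z := decide (w ≤ z)
  map_inf' e f := by simp only [le_inf_iff, Bool.decide_and]
  exists_true := ⟨w, decide_eq_true le_rfl⟩

@[simp]
theorem principal_toFun_eq_true {w z : E} : (principal w).toFun z = true ↔ w ≤ z := by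
  simp [principal]

open scoped Classical in
noncomputable def eventuallyAbove {ι : Type*} (l : Filter ι) (y : ι → E)
    (h : ∃ x, ∀ᶠ i in l, y i ≤ x) : SemiCharInf E where
  toFun z := decide (∀ᶠ i in l, y i ≤ z)
  map_inf' e f := by simp only [le_inf_iff, eventually_and, Bool.decide_and]
  exists_true := h.imp fun _ hx => decide_eq_true hx

@[simp]
theorem eventuallyAbove_toFun_eq_true {ι : Type*} {l : Filter ι} {y : ι → E}
    {h : ∃ x, ∀ᶠ i in l, y i ≤ x} {z : E} :
    (eventuallyAbove l y h).toFun z = true ↔ ∀ᶠ i in l, y i ≤ z := by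
  simp [eventuallyAbove]

theorem tendsto_nhds_iff {α : Type*} {l : Filter α} {g : α → SemiCharInf E}
    {χ : SemiCharInf E} :
    Tendsto g l (𝓝 χ) ↔ ∀ e, ∀ᶠ a in l, (g a).toFun e = χ.toFun e := by
  rw [nhds_induced, tendsto_comap_iff, tendsto_pi_nhds]
  simp only [Function.comp_apply, nhds_discrete, tendsto_pure]

theorem tendsto_principal_eventuallyAbove {ι : Type*} (𝒰 : Ultrafilter ι) (y : ι → E)
    (h : ∃ x, ∀ᶠ i in (𝒰 : Filter ι), y i ≤ x) :
    Tendsto (fun i => principal (y i)) 𝒰 (𝓝 (eventuallyAbove 𝒰 y h)) := by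
  refine tendsto_nhds_iff.2 fun z => ?_
  by_cases hz : ∀ᶠ i in (𝒰 : Filter ι), y i ≤ z
  · filter_upwards [hz] with i hi
    rw [Bool.eq_iff_iff, principal_toFun_eq_true, eventuallyAbove_toFun_eq_true]
    exact iff_of_true hi hz
  · filter_upwards [Ultrafilter.eventually_not.2 hz] with i hi
    rw [Bool.eq_iff_iff, principal_toFun_eq_true, eventuallyAbove_toFun_eq_true]
    exact iff_of_false hi hz

end SemiCharInf

theorem exists_not_le_of_not_finGenDownset {P : Type*} [Preorder P] {D : Set P}
    (hD : IsDownset D) (hfg : ¬ FinGenDownset D) (A : Finset P) :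
    ∃ y ∈ D, ∀ a ∈ A, a ∈ D → ¬ y ≤ a := by
  classical
  by_contra! h
  refine hfg ⟨A.filter (· ∈ D), Set.ext fun y => ⟨fun hy => ?_, ?_⟩⟩
  · obtain ⟨a, ha, haD, hya⟩ := h y hy
    exact ⟨a, Finset.mem_filter.2 ⟨ha, haD⟩, hya⟩
  · rintro ⟨a, ha, hya⟩
    exact hD hya (Finset.mem_filter.1 ha).2

theorem not_eventually_le_of_forall_not_le {P : Type*} [Preorder P] {D : Set P}
    {y : Finset P → P} (hy : ∀ A, ∀ a ∈ A, a ∈ D → ¬ y A ≤ a) {l : Filter (Finset P)} [l.NeBot]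
    (hl : l ≤ atTop) {w : P} (hw : w ∈ D) : ¬ ∀ᶠ A in l, y A ≤ w := fun h =>
  let ⟨A, hwA, hyw⟩ := (Eventually.and (hl (eventually_ge_atTop {w})) h).exists
  hy A w (Finset.singleton_subset_iff.1 hwA) hw hyw

section Induced

variable {E₁ E₂ : Type*} [SemilatticeInf E₁] [SemilatticeInf E₂] {φ : E₁ → E₂}

theorem exists_map_le_iff_of_eq_finGen (hφ : ∀ x y : E₁, φ (x ⊓ y) = φ x ⊓ φ y) {X : Set E₁}
    (hX : IsDownset X) {x : E₁} (hx : x ∈ X) {f : E₂} {A : Finset E₁}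
    (hA : {y | y ∈ X ∧ φ y ≤ f} = {y | ∃ a ∈ A, y ≤ a}) {χ : SemiCharInf E₁}
    (hχx : χ.toFun x = true) :
    (∃ z, χ.toFun z = true ∧ φ z ≤ f) ↔ ∃ a ∈ A, χ.toFun a = true := by
  constructor
  · rintro ⟨z, hz, hzf⟩
    have hzx : z ⊓ x ∈ {y | y ∈ X ∧ φ y ≤ f} :=
      ⟨hX inf_le_right hx, hφ z x ▸ inf_le_left.trans hzf⟩
    obtain ⟨a, ha, hza⟩ := hA ▸ hzx
    exact ⟨a, ha, χ.eq_true_of_le hza (χ.inf_eq_true hz hχx)⟩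
  · rintro ⟨a, ha, hχa⟩
    have haA : a ∈ {y | ∃ a ∈ A, y ≤ a} := ⟨a, ha, le_rfl⟩
    exact ⟨a, hχa, (hA ▸ haA : a ∈ {y | y ∈ X ∧ φ y ≤ f}).2⟩

theorem eventually_exists_map_le_iff_of_locallyCoherent (hφ : ∀ x y : E₁, φ (x ⊓ y) = φ x ⊓ φ y)
    (hLC : LocallyCoherent φ) (χ₀ : SemiCharInf E₁) (f : E₂) :
    ∀ᶠ χ in 𝓝 χ₀, (∃ z, χ.toFun z = true ∧ φ z ≤ f) ↔ ∃ z, χ₀.toFun z = true ∧ φ z ≤ f := by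
  classical
  obtain ⟨x, hx⟩ := χ₀.exists_true
  obtain ⟨X, hX, hxX, hfg⟩ := hLC x
  obtain ⟨A, hA⟩ := hfg f
  have hagree : ∀ᶠ χ in 𝓝 χ₀, ∀ s ∈ insert x A, χ.toFun s = χ₀.toFun s :=
    (eventually_all_finset _).2 fun s _ => SemiCharInf.tendsto_nhds_iff.1 tendsto_id s
  filter_upwards [hagree] with χ hχ
  rw [exists_map_le_iff_of_eq_finGen hφ hX hxX hA ((hχ x (Finset.mem_insert_self x A)).trans hx),
    exists_map_le_iff_of_eq_finGen hφ hX hxX hA hx]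
  exact exists_congr fun a => and_congr_right fun ha => by rw [hχ a (Finset.mem_insert_of_mem ha)]

theorem continuous_of_locallyCoherent (hφ : ∀ x y : E₁, φ (x ⊓ y) = φ x ⊓ φ y)
    {H : SemiCharInf E₁ → SemiCharInf E₂}
    (hH : ∀ χ f, (H χ).toFun f = true ↔ ∃ x, χ.toFun x = true ∧ φ x ≤ f)
    (hLC : LocallyCoherent φ) : Continuous H := by
  refine continuous_iff_continuousAt.2 fun χ₀ => SemiCharInf.tendsto_nhds_iff.2 fun f => ?_
  filter_upwards [eventually_exists_map_le_iff_of_locallyCoherent hφ hLC χ₀ f] with χ hχ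
  rw [Bool.eq_iff_iff, hH, hH, hχ]

theorem locallyCoherent_of_continuous (hφ : ∀ x y : E₁, φ (x ⊓ y) = φ x ⊓ φ y)
    {H : SemiCharInf E₁ → SemiCharInf E₂}
    (hH : ∀ χ f, (H χ).toFun f = true ↔ ∃ x, χ.toFun x = true ∧ φ x ≤ f)
    (hc : Continuous H) : LocallyCoherent φ := by
  intro x
  refine ⟨Set.Iic x, fun a b hba ha => hba.trans ha, le_rfl, fun e => ?_⟩
  by_contra hfg
  have hD : IsDownset {y | y ∈ Set.Iic x ∧ φ y ≤ e} := fun a b hba ha =>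
    ⟨hba.trans ha.1, (Monotone.of_map_inf hφ hba).trans ha.2⟩
  choose y hyD hy using exists_not_le_of_not_finGenDownset hD hfg
  let 𝒰 : Ultrafilter (Finset E₁) := .of atTop
  have hbdd : ∃ x', ∀ᶠ A in (𝒰 : Filter _), y A ≤ x' := ⟨x, .of_forall fun A => (hyD A).1⟩
  let χ₀ := SemiCharInf.eventuallyAbove 𝒰 y hbdd
  have hχ₀ : (H χ₀).toFun e = false := by
    rw [Bool.eq_false_iff, ne_eq, hH]
    rintro ⟨z, hz, hze⟩
    refine not_eventually_le_of_forall_not_le hy (Ultrafilter.of_le atTop) (w := z ⊓ x)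
      ⟨inf_le_right, hφ z x ▸ inf_le_left.trans hze⟩ ?_
    filter_upwards [SemiCharInf.eventuallyAbove_toFun_eq_true.1 hz] with A hA
    exact le_inf hA (hyD A).1
  have hlim := SemiCharInf.tendsto_nhds_iff.1
    ((hc.tendsto χ₀).comp (SemiCharInf.tendsto_principal_eventuallyAbove 𝒰 y hbdd)) e
  obtain ⟨A, hA⟩ := hlim.exists
  have hyA : (H (SemiCharInf.principal (y A))).toFun e = true :=
    (hH _ e).2 ⟨y A, SemiCharInf.principal_toFun_eq_true.2 le_rfl, (hyD A).2⟩
  exact Bool.noConfusion (hyA.symm.trans (hA.trans hχ₀))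

end Induced

theorem stmt9 {E₁ E₂ : Type*} [SemilatticeInf E₁] [SemilatticeInf E₂]
    (φ : E₁ → E₂) (hφ : ∀ x y : E₁, φ (x ⊓ y) = φ x ⊓ φ y)
    (H : SemiCharInf E₁ → SemiCharInf E₂)
    (hH : ∀ (χ : SemiCharInf E₁) (f : E₂),
      (H χ).toFun f = true ↔ ∃ x : E₁, χ.toFun x = true ∧ φ x ≤ f) :
    Continuous H ↔ LocallyCoherent φ :=
  ⟨locallyCoherent_of_continuous hφ hH, continuous_of_locallyCoherent hφ hH⟩
end

section
/- Let φ : S → T be a homomorphism of inverse semigroups that is locally coherent with respect to the natural partial orders: for every s ∈ S there is a downset X of (S, ≤) containing s such that, for every t ∈ T, the set {x ∈ X : φ(x) ≤ t} is a finitely generated downset. Then the restriction of φ to the idempotents is locally coherent: for every e ∈ E(S) and every f ∈ E(T) there is a finite set A ⊆ E(S) such that {x ∈ E(S) : x ≤ e and φ(x) ≤ f} = {x ∈ E(S) : x ≤ a for some a ∈ A}. -/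
open InverseSemigroup

section AuxLemmas

variable {S : Type*} [InverseSemigroup S]

lemma my_star_idem {e : S} (he : e * e = e) : star e = e := by
  set f := star e with hfdef
  have h1 : e * f * e = e := mul_star_mul_self e
  have h2 : f * e * f = f := star_mul_star_self e
  have hef : (e * f) * (e * f) = e * f := mul_star_idem e
  have hfe : (f * e) * (f * e) = f * e := idem_star_mul e
  have he_ef : e = e * f := by
    have hc : (e * f) * e = e * (e * f) := idem_comm (e * f) e hef he
    calc e = e * f * e := h1.symm
      _ = e * (e * f) := hc
      _ = (e * e) * f := by rw [mul_assoc]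
      _ = e * f := by rw [he]
  have he_fe : e = f * e := by
    have hc : e * (f * e) = (f * e) * e := idem_comm e (f * e) he hfe
    calc e = e * f * e := h1.symm
      _ = e * (f * e) := by rw [mul_assoc]
      _ = (f * e) * e := hc
      _ = f * (e * e) := by rw [mul_assoc]
      _ = f * e := by rw [he]
  calc f = f * e * f := h2.symm
    _ = e * f := by rw [← he_fe]
    _ = e := he_ef.symm

lemma nle_refl (s : S) : nle s s := by
  show s = s * (star s * s)
  rw [← mul_assoc, mul_star_mul_self]

lemma nle_mul_idem (t : S) {g : S} (hg : g * g = g) : nle (t * g) t := by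
  have hsg : star g = g := my_star_idem hg
  have htt : (star t * t) * (star t * t) = star t * t := idem_star_mul t
  have hc : g * (star t * t) = (star t * t) * g := idem_comm g _ hg htt
  show t * g = t * (star (t * g) * (t * g))
  rw [star_mul, hsg]
  have hkey : g * star t * (t * g) = (star t * t) * g := by
    calc g * star t * (t * g) = (g * (star t * t)) * g := by simp only [mul_assoc]
      _ = ((star t * t) * g) * g := by rw [hc]
      _ = (star t * t) * (g * g) := by rw [mul_assoc]
      _ = (star t * t) * g := by rw [hg]
  calc t * g = (t * star t * t) * g := by rw [mul_star_mul_self]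
    _ = t * ((star t * t) * g) := by simp only [mul_assoc]
    _ = t * (g * star t * (t * g)) := by rw [hkey]

lemma nle_iff {s t : S} : nle s t ↔ ∃ g, g * g = g ∧ s = t * g :=
  ⟨fun h => ⟨star s * s, idem_star_mul s, h⟩,
   fun ⟨_, hg, hs⟩ => hs ▸ nle_mul_idem t hg⟩

lemma nle_trans {s t u : S} (h1 : nle s t) (h2 : nle t u) : nle s u := by
  obtain ⟨g, hg, hs⟩ := nle_iff.1 h1
  obtain ⟨h, hh, ht⟩ := nle_iff.1 h2
  exact nle_iff.2 ⟨h * g, idem_mul hh hg, by rw [hs, ht, mul_assoc]⟩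

lemma idem_nle_iff {x t : S} (hx : x * x = x) : nle x t ↔ x = t * x := by
  show x = t * (star x * x) ↔ x = t * x
  rw [my_star_idem hx, hx]

end AuxLemmas

theorem stmt11 {S T : Type*} [InverseSemigroup S] [InverseSemigroup T]
    (φ : S → T) (hhom : ∀ x y : S, φ (x * y) = φ x * φ y)
    (hstar : ∀ x : S, φ (star x) = star (φ x))
    (hlc : ∀ s : S, ∃ X : Set S,
      (∀ ⦃x y : S⦄, nle y x → x ∈ X → y ∈ X) ∧ s ∈ X ∧
      ∀ t : T, ∃ A : Finset S,
        {x : S | x ∈ X ∧ nle (φ x) t} = {x : S | ∃ a ∈ A, nle x a}) :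
    ∀ e : S, e * e = e → ∀ f : T, f * f = f →
      ∃ A : Finset S, (∀ a ∈ A, a * a = a) ∧
        {x : S | x * x = x ∧ nle x e ∧ nle (φ x) f} =
        {x : S | x * x = x ∧ ∃ a ∈ A, nle x a} := by
  have phi_mono : ∀ {x y : S}, nle x y → nle (φ x) (φ y) := by
    intro x y h
    show φ x = φ y * (star (φ x) * φ x)
    conv_lhs => rw [h]
    rw [hhom, hhom, hstar]
  intro e he f hf
  classical
  obtain ⟨X, hdown, heX, hfin⟩ := hlc e
  obtain ⟨A, hA⟩ := hfin f
  refine ⟨A.image (fun a => e * (a * star a)), ?_, ?_⟩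
  · intro a' ha'
    simp only [Finset.mem_image] at ha'
    obtain ⟨a, _, rfl⟩ := ha'
    exact idem_mul he (mul_star_idem a)
  · ext x
    simp only [Set.mem_setOf_eq, Finset.mem_image]
    constructor
    · rintro ⟨hx, hxe, hxf⟩
      have hxX : x ∈ X := hdown hxe heX
      have hmem : x ∈ {x : S | x ∈ X ∧ nle (φ x) f} := ⟨hxX, hxf⟩
      rw [hA] at hmem
      obtain ⟨a, haA, hxa⟩ := hmem
      refine ⟨hx, e * (a * star a), ⟨a, haA, rfl⟩, ?_⟩
      have hax : x = a * x := (idem_nle_iff hx).1 hxa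
      have hex : x = e * x := (idem_nle_iff hx).1 hxe
      have h1 : (a * star a) * x = x := by
        calc (a * star a) * x = a * star a * (a * x) := by rw [← hax]
          _ = (a * star a * a) * x := by simp only [mul_assoc]
          _ = a * x := by rw [mul_star_mul_self]
          _ = x := hax.symm
      refine (idem_nle_iff hx).2 ?_
      calc x = e * x := hex
        _ = e * ((a * star a) * x) := by rw [h1]
        _ = e * (a * star a) * x := by simp only [mul_assoc]
    · rintro ⟨hx, a', ⟨a, haA, rfl⟩, hxa'⟩
      have haf : nle (φ a) f := by
        have hmem : a ∈ {x : S | ∃ b ∈ A, nle x b} := ⟨a, haA, nle_refl a⟩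
        rw [← hA] at hmem
        exact hmem.2
      have ha'e : nle (e * (a * star a)) e := nle_mul_idem e (mul_star_idem a)
      -- φ a' ≤ f
      have hg : φ e * φ e = φ e := by rw [← hhom, he]
      set b := φ a with hbdef
      have hbb : (b * star b) * (b * star b) = b * star b := mul_star_idem b
      have hbf : b = f * (star b * b) := haf
      have key : f * (b * star b) = b * star b := by
        have h1 : b * star b = f * star b := by
          calc b * star b = (f * (star b * b)) * star b := by rw [← hbf]
            _ = f * (star b * b * star b) := by simp only [mul_assoc]
            _ = f * star b := by rw [star_mul_star_self]
        calc f * (b * star b) = f * (f * star b) := by rw [h1]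
          _ = (f * f) * star b := by rw [mul_assoc]
          _ = f * star b := by rw [hf]
          _ = b * star b := h1.symm
      have ha'idem : (φ e * (b * star b)) * (φ e * (b * star b)) = φ e * (b * star b) :=
        idem_mul hg hbb
      have ha'f : nle (φ e * (b * star b)) f := by
        refine (idem_nle_iff ha'idem).2 ?_
        have hc : f * φ e = φ e * f := idem_comm f (φ e) hf hg
        calc φ e * (b * star b) = φ e * (f * (b * star b)) := by rw [key]
          _ = (φ e * f) * (b * star b) := by rw [mul_assoc]
          _ = (f * φ e) * (b * star b) := by rw [hc]
          _ = f * (φ e * (b * star b)) := by rw [mul_assoc]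
      have hphia' : φ (e * (a * star a)) = φ e * (b * star b) := by
        rw [hhom, hhom, hstar]
      refine ⟨hx, nle_trans hxa' ha'e, ?_⟩
      have := phi_mono hxa'
      rw [hphia'] at this
      exact nle_trans this ha'f
end

section
/- Let φ : S → T be a homomorphism of inverse semigroups, let χ be a semi-character of E(S), and let s ∈ S with χ(s*·s) = true. Then for every idempotent f ∈ E(T): there exists x ∈ E(S) with χ(s*·x·s) = true and φ(x) ≤ f if and only if there exists y ∈ E(S) with χ(y) = true and φ(y) ≤ φ(s)*·f·φ(s). (That is, φ̂(s·χ) = φ(s)·φ̂(χ), where φ̂(χ)(f) = true iff some x ∈ E(S) satisfies χ(x) = true and φ(x) ≤ f, and (s·χ)(e) = χ(s*·e·s).) -/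
open InverseSemigroup

/-! For `x` as on the left take `y = s*·x·s`; for `y` as on the right take `x = s·y·s*`, on which
`s·χ` is `χ((s*·s)·y·(s*·s)) = χ(s*·s) && χ(y)`. The order conditions transfer because
conjugation `a ↦ t*·a·t` is monotone on idempotents and `t·(t*·f·t)·t* = (t·t*)·f·(t·t*) ≤ f`. -/

namespace InverseSemigroup

variable {S : Type*} [InverseSemigroup S]

lemma nle_iff_eq_mul_of_idem {a t : S} (ha : a * a = a) : nle a t ↔ a = t * a := by
  rw [nle, star_eq_self_of_idem ha, ha]

lemma idem_conj_star {e : S} (he : e * e = e) (s : S) :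
    (s * e * star s) * (s * e * star s) = s * e * star s := by
  simpa only [star_star] using idem_conj he (star s)

lemma conj_nle_conj {a f : S} (ha : a * a = a) (hf : f * f = f) (hle : nle a f) (t : S) :
    nle (star t * a * t) (star t * f * t) := by
  rw [nle_iff_eq_mul_of_idem (idem_conj ha t), conj_mul hf ha t,
    ← (nle_iff_eq_mul_of_idem ha).1 hle]

lemma conj_nle_of_nle_conj {a f t : S} (ha : a * a = a) (hf : f * f = f)
    (hle : nle a (star t * f * t)) : nle (t * a * star t) f := by
  rw [nle_iff_eq_mul_of_idem (idem_conj_star ha t)]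
  have hc : (t * star t) * f = f * (t * star t) := idem_comm _ _ (mul_star_idem t) hf
  calc t * a * star t = t * ((star t * f * t) * a) * star t := by
        rw [← (nle_iff_eq_mul_of_idem ha).1 hle]
    _ = (t * star t) * f * (t * a * star t) := by simp only [mul_assoc]
    _ = f * ((t * star t * t) * a * star t) := by rw [hc]; simp only [mul_assoc]
    _ = f * (t * a * star t) := by rw [mul_star_mul_self]

end InverseSemigroup

lemma SemiChar.toFun_mul_eq_true {E : Type*} [Mul E] (χ : SemiChar E) (e f : E) :
    χ.toFun (e * f) = true ↔ χ.toFun e = true ∧ χ.toFun f = true := by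
  rw [χ.map_mul', Bool.and_eq_true]

section Homomorphism

variable {S T : Type*} [InverseSemigroup S] [InverseSemigroup T] {φ : S → T}

lemma map_idem_of_map_mul (hhom : ∀ x y : S, φ (x * y) = φ x * φ y) {e : S} (he : e * e = e) :
    φ e * φ e = φ e := by
  rw [← hhom, he]

lemma map_conj_of_map_mul (hhom : ∀ x y : S, φ (x * y) = φ x * φ y)
    (hstar : ∀ x : S, φ (star x) = star (φ x)) (s x : S) :
    φ (star s * x * s) = star (φ s) * φ x * φ s := by
  rw [hhom, hhom, hstar]

lemma map_conj_star_of_map_mul (hhom : ∀ x y : S, φ (x * y) = φ x * φ y)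
    (hstar : ∀ x : S, φ (star x) = star (φ x)) (s x : S) :
    φ (s * x * star s) = φ s * φ x * star (φ s) := by
  rw [hhom, hhom, hstar]

end Homomorphism

theorem stmt13 {S T : Type*} [InverseSemigroup S] [InverseSemigroup T]
    (φ : S → T) (hhom : ∀ x y : S, φ (x * y) = φ x * φ y)
    (hstar : ∀ x : S, φ (star x) = star (φ x))
    (χ : SemiChar (Idem S)) (s : S)
    (hs : χ.toFun ⟨star s * s, idem_star_mul s⟩ = true) :
    ∀ f : T, f * f = f →
      ((∃ x : Idem S, χ.toFun (conjIdem s x) = true ∧ nle (φ x.1) f) ↔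
        (∃ y : Idem S, χ.toFun y = true ∧ nle (φ y.1) (star (φ s) * f * φ s))) := by
  intro f hf
  constructor
  · rintro ⟨x, hx, hle⟩
    refine ⟨conjIdem s x, hx, ?_⟩
    rw [conjIdem, map_conj_of_map_mul hhom hstar]
    exact conj_nle_conj (map_idem_of_map_mul hhom x.2) hf hle (φ s)
  · rintro ⟨y, hy, hle⟩
    let x : Idem S := ⟨s * y.1 * star s, idem_conj_star y.2 s⟩
    let d : Idem S := ⟨star s * s, idem_star_mul s⟩
    have hconj : conjIdem s x = d * y * d := Subtype.ext <| by
      show star s * (s * y.1 * star s) * s = star s * s * y.1 * (star s * s)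
      simp only [mul_assoc]
    refine ⟨x, ?_, ?_⟩
    · rw [hconj, χ.toFun_mul_eq_true, χ.toFun_mul_eq_true]
      exact ⟨⟨hs, hy⟩, hs⟩
    · rw [map_conj_star_of_map_mul hhom hstar]
      exact conj_nle_of_nle_conj (map_idem_of_map_mul hhom y.2) hf hle
end

section
/- Let φ : E₁ → E₂ be a homomorphism of meet-semilattices and let χ be a semi-character of E₁. Then the function φ̂(χ) : E₂ → Bool, defined by φ̂(χ)(f) = true iff there exists x ∈ E₁ with χ(x) = true and φ(x) ≤ f, is a semi-character of E₂: it satisfies φ̂(χ)(f ∧ f') = φ̂(χ)(f) && φ̂(χ)(f') for all f, f' ∈ E₂ and is not identically false. -/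
theorem stmt16 {E₁ E₂ : Type*} [SemilatticeInf E₁] [SemilatticeInf E₂]
    (φ : E₁ → E₂) (hφ : ∀ x y : E₁, φ (x ⊓ y) = φ x ⊓ φ y)
    (χ : SemiCharInf E₁) :
    let h : E₂ → Bool := fun f =>
      @decide (∃ x : E₁, χ.toFun x = true ∧ φ x ≤ f) (Classical.propDecidable _)
    (∀ f f' : E₂, h (f ⊓ f') = (h f && h f')) ∧ ∃ f : E₂, h f = true := by
  intro h
  constructor
  · intro f f'
    have : (∃ x : E₁, χ.toFun x = true ∧ φ x ≤ f ⊓ f') ↔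
        (∃ x : E₁, χ.toFun x = true ∧ φ x ≤ f) ∧
        (∃ x : E₁, χ.toFun x = true ∧ φ x ≤ f') := by
      constructor
      · rintro ⟨x, hx, hle⟩
        exact ⟨⟨x, hx, hle.trans inf_le_left⟩, ⟨x, hx, hle.trans inf_le_right⟩⟩
      · rintro ⟨⟨x, hx, hxf⟩, ⟨y, hy, hyf⟩⟩
        refine ⟨x ⊓ y, ?_, ?_⟩
        · rw [χ.map_inf', hx, hy]; rfl
        · rw [hφ]
          exact le_inf ((inf_le_left).trans hxf) ((inf_le_right).trans hyf)
    simp only [h]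
    have := Classical.propDecidable
    rw [← Bool.decide_and, decide_eq_decide]
    exact ‹_ ↔ _›
  · obtain ⟨e, he⟩ := χ.exists_true
    refine ⟨φ e, ?_⟩
    simp only [h, decide_eq_true_eq]
    exact ⟨e, he, le_rfl⟩
end
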